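/- arXiv:2104.10816 — 3 statements merged into one kernel-verified Lean document; each statement's English description precedes it below -/
import Mathlib

section
/- Let A = 1 + 2k with k a positive integer. Then for −1 < μ < 1, I_A(μ) = (2^{−k}/Γ(k)) Σ_{j=0}^{⌊(k−1)/2⌋} C'_{j,k} μ^{k−1−2j}(1−μ²)^j, where C'_{j,k} are the coefficients arising from (−∂_λ)^{k−1}(1−λ²)^{k−1} evaluated at λ = μ; in particular I_A is a polynomial in μ on (−1,1), I_A(μ) = 0 for μ < −1, and lim_{μ→1⁻} I_A(μ) = 1/2. -/
open Real Filter Topology Polynomial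

private lemma iteratedDeriv_polyEval (m : ℕ) (p : ℝ[X]) :
    iteratedDeriv m (fun x => p.eval x) = fun x => (derivative^[m] p).eval x := by
  induction m generalizing p with
  | zero => simp
  | succ m ih =>
      rw [iteratedDeriv_succ', Function.iterate_succ_apply]
      have : deriv (fun x => p.eval x) = fun x => p.derivative.eval x :=
        funext fun x => Polynomial.deriv p
      rw [this, ih]

private lemma coeff_comp_negX (p : ℝ[X]) (i : ℕ) :
    (p.comp (-X)).coeff i = (-1) ^ i * p.coeff i := by
  induction p using Polynomial.induction_on' with
  | add p q hp hq => simp [add_comp, hp, hq, mul_add]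
  | monomial m a =>
      have hm : (monomial m a).comp (-X) = C ((-1) ^ m * a) * X ^ m := by
        rw [← C_mul_X_pow_eq_monomial, mul_comp, C_comp, pow_comp, X_comp, neg_pow,
          map_mul, map_pow, map_neg, map_one]
        ring
      rw [hm, coeff_C_mul, coeff_X_pow, coeff_monomial]
      rcases eq_or_ne i m with rfl | h
      · simp
      · simp [h, Ne.symm h]

/-- For odd `A = 1 + 2k`, the kernel `I_A(μ)` equals
`(2^{-k}/Γ(k)) · [(-d/dλ)^{k-1}(1-λ²)^{k-1}]_{λ=μ}` on `(-1,1)` and `0` outside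
`[-1,1]`.  It is a polynomial combination `Σ C'_{j,k} μ^{k-1-2j}(1-μ²)^j` on
`(-1,1)`, vanishes for `μ < -1`, and tends to `1/2` as `μ → 1⁻`. -/
theorem stmt7 (k : ℕ) (hk : 1 ≤ k)
    (IA : ℝ → ℝ)
    (hIA : ∀ μ : ℝ, IA μ =
      if μ ∈ Set.Ioo (-1 : ℝ) 1 then
        (2 : ℝ) ^ (-(k : ℝ)) / Real.Gamma k *
          ((-1 : ℝ) ^ (k - 1) *
            iteratedDeriv (k - 1) (fun l : ℝ => (1 - l ^ 2) ^ (k - 1)) μ)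
      else 0) :
    (∃ C : ℕ → ℝ,
      ∀ μ ∈ Set.Ioo (-1 : ℝ) 1,
        IA μ = (2 : ℝ) ^ (-(k : ℝ)) / Real.Gamma k *
          ∑ j ∈ Finset.range ((k - 1) / 2 + 1),
            C j * μ ^ (k - 1 - 2 * j) * (1 - μ ^ 2) ^ j) ∧
    (∀ μ : ℝ, μ < -1 → IA μ = 0) ∧
    Tendsto IA (𝓝[<] 1) (𝓝 (1 / 2)) := by
  obtain ⟨n, rfl⟩ : ∃ n, k = n + 1 := ⟨k - 1, (Nat.succ_pred_eq_of_pos hk).symm⟩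
  simp only [Nat.add_sub_cancel] at hIA ⊢
  set c : ℝ := (2 : ℝ) ^ (-((n : ℝ) + 1)) / Real.Gamma ((n : ℝ) + 1) with hc
  set P : ℝ[X] := ((1 : ℝ[X]) - X ^ 2) ^ n with hP
  set Q : ℝ[X] := derivative^[n] P with hQ
  -- the iterated derivative is the evaluation of Q
  have hQev : ∀ μ : ℝ, iteratedDeriv n (fun l : ℝ => (1 - l ^ 2) ^ n) μ = Q.eval μ := by
    intro μ
    have hfun : (fun l : ℝ => (1 - l ^ 2) ^ n) = fun l => P.eval l := by
      funext l; simp [hP]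
    rw [hfun, iteratedDeriv_polyEval]
  -- IA on the interval
  have hIA' : ∀ μ ∈ Set.Ioo (-1 : ℝ) 1, IA μ = c * ((-1) ^ n * Q.eval μ) := by
    intro μ hμ
    rw [hIA μ, if_pos hμ, hQev μ, hc]
    push_cast
    ring
  -- degree bound
  have hdeg : Q.natDegree ≤ n := by
    have h1 : P.natDegree ≤ 2 * n := by
      refine le_trans (natDegree_pow_le) ?_
      have : ((1 : ℝ[X]) - X ^ 2).natDegree ≤ 2 := by
        refine le_trans (natDegree_sub_le _ _) ?_
        simp [natDegree_X_pow]
      nlinarith [this]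
    have h2 : Q.natDegree ≤ P.natDegree - n := P.natDegree_iterate_derivative n
    omega
  -- parity of coefficients
  have hparf : ∀ x : ℝ, Q.eval (-x) = (-1) ^ n * Q.eval x := by
    intro x
    have h := iteratedDeriv_comp_neg n (fun l : ℝ => (1 - l ^ 2) ^ n) x
    have heq : (fun x : ℝ => (1 - (-x) ^ 2) ^ n) = fun l : ℝ => (1 - l ^ 2) ^ n := by
      funext y; simp
    rw [heq] at h
    rw [hQev, hQev, smul_eq_mul] at h
    have hsq : ((-1 : ℝ) ^ n) * ((-1 : ℝ) ^ n) = 1 := by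
      rw [← pow_add]; exact Even.neg_one_pow ⟨n, rfl⟩
    linear_combination (-(-1 : ℝ) ^ n) * h - (Q.eval (-x)) * hsq
  have hcomp : Q.comp (-X) = C ((-1 : ℝ) ^ n) * Q := by
    apply Polynomial.funext
    intro x
    rw [eval_comp]
    simp only [eval_neg, eval_X, eval_mul, eval_C]
    exact hparf x
  have hpar : ∀ i : ℕ, i % 2 ≠ n % 2 → Q.coeff i = 0 := by
    intro i hi
    have h1 : (Q.comp (-X)).coeff i = (-1) ^ i * Q.coeff i := coeff_comp_negX Q i
    rw [hcomp, coeff_C_mul] at h1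
    have h2 : ((-1 : ℝ) ^ i) = -(-1) ^ n := by
      rcases Nat.even_or_odd n with he | ho
      · have hoi : Odd i := by rw [Nat.odd_iff]; rw [Nat.even_iff] at he; omega
        simp [hoi.neg_one_pow, he.neg_one_pow]
      · have hei : Even i := by rw [Nat.even_iff]; rw [Nat.odd_iff] at ho; omega
        simp [hei.neg_one_pow, ho.neg_one_pow]
    rw [h2] at h1
    have hsq : ((-1 : ℝ) ^ n) * ((-1 : ℝ) ^ n) = 1 := by
      rw [← pow_add]; exact Even.neg_one_pow ⟨n, rfl⟩
    linear_combination ((-1 : ℝ) ^ n / 2) * h1 - (Q.coeff i) * hsq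
  -- representation of Q.eval as a sum over the right-parity monomials
  have hrep : ∀ μ : ℝ, Q.eval μ =
      ∑ j ∈ Finset.range (n / 2 + 1), Q.coeff (n - 2 * j) * μ ^ (n - 2 * j) := by
    intro μ
    rw [Polynomial.eval_eq_sum_range' (lt_of_le_of_lt hdeg (Nat.lt_succ_self n))]
    rw [← Finset.sum_filter_add_sum_filter_not (Finset.range (n + 1))
      (fun i => i % 2 = n % 2)]
    have hz : ∑ i ∈ (Finset.range (n + 1)).filter (fun i => ¬ i % 2 = n % 2),
        Q.coeff i * μ ^ i = 0 := by
      apply Finset.sum_eq_zero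
      intro i hi
      rw [Finset.mem_filter] at hi
      rw [hpar i hi.2, zero_mul]
    rw [hz, add_zero]
    refine Finset.sum_nbij' (fun i => (n - i) / 2) (fun j => n - 2 * j) ?_ ?_ ?_ ?_ ?_
    · intro a ha
      simp only [Finset.mem_filter, Finset.mem_range] at ha ⊢
      omega
    · intro j hj
      simp only [Finset.mem_filter, Finset.mem_range] at hj ⊢
      omega
    · intro a ha
      simp only [Finset.mem_filter, Finset.mem_range] at ha
      show n - 2 * ((n - a) / 2) = a
      omega
    · intro j hj
      simp only [Finset.mem_range] at hj
      show (n - (n - 2 * j)) / 2 = j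
      omega
    · intro a ha
      simp only [Finset.mem_filter, Finset.mem_range] at ha
      have hre : n - 2 * ((n - a) / 2) = a := by omega
      show _ = Q.coeff (n - 2 * ((n - a) / 2)) * μ ^ (n - 2 * ((n - a) / 2))
      rw [hre]
  -- binomial expansion of the monomials in the target basis
  have hpow : ∀ (μ : ℝ) (j : ℕ), j ∈ Finset.range (n / 2 + 1) →
      (μ : ℝ) ^ (n - 2 * j) = ∑ i ∈ Finset.range (j + 1),
        (j.choose i : ℝ) * (μ ^ (n - 2 * i) * (1 - μ ^ 2) ^ i) := by
    intro μ j hj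
    rw [Finset.mem_range] at hj
    have h1 : ((1 - μ ^ 2) + μ ^ 2) ^ j = ∑ i ∈ Finset.range (j + 1),
        (1 - μ ^ 2) ^ i * (μ ^ 2) ^ (j - i) * (j.choose i : ℝ) := add_pow _ _ _
    calc (μ : ℝ) ^ (n - 2 * j)
        = μ ^ (n - 2 * j) * ((1 - μ ^ 2) + μ ^ 2) ^ j := by
          rw [show (1 - μ ^ 2) + μ ^ 2 = (1 : ℝ) by ring, one_pow, mul_one]
      _ = ∑ i ∈ Finset.range (j + 1),
            (j.choose i : ℝ) * (μ ^ (n - 2 * i) * (1 - μ ^ 2) ^ i) := by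
          rw [h1, Finset.mul_sum]
          apply Finset.sum_congr rfl
          intro i hi
          rw [Finset.mem_range] at hi
          have he : μ ^ (n - 2 * j) * (μ ^ 2) ^ (j - i) = μ ^ (n - 2 * i) := by
            rw [← pow_mul, ← pow_add]
            congr 1
            omega
          calc μ ^ (n - 2 * j) * ((1 - μ ^ 2) ^ i * (μ ^ 2) ^ (j - i) * (j.choose i : ℝ))
              = (μ ^ (n - 2 * j) * (μ ^ 2) ^ (j - i)) * (1 - μ ^ 2) ^ i * (j.choose i : ℝ) := by
                ring
            _ = (j.choose i : ℝ) * (μ ^ (n - 2 * i) * (1 - μ ^ 2) ^ i) := by rw [he]; ring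
  -- the key identity
  have key : ∀ μ : ℝ, (-1 : ℝ) ^ n * Q.eval μ =
      ∑ i ∈ Finset.range (n / 2 + 1),
        ((-1 : ℝ) ^ n * ∑ j ∈ Finset.range (n / 2 + 1),
          Q.coeff (n - 2 * j) * (j.choose i : ℝ)) * μ ^ (n - 2 * i) * (1 - μ ^ 2) ^ i := by
    intro μ
    rw [hrep μ]
    have step : ∀ j ∈ Finset.range (n / 2 + 1),
        Q.coeff (n - 2 * j) * μ ^ (n - 2 * j) =
        ∑ i ∈ Finset.range (n / 2 + 1),
          Q.coeff (n - 2 * j) * ((j.choose i : ℝ) * (μ ^ (n - 2 * i) * (1 - μ ^ 2) ^ i)) := by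
      intro j hj
      rw [show (∑ i ∈ Finset.range (n / 2 + 1),
          Q.coeff (n - 2 * j) * ((j.choose i : ℝ) * (μ ^ (n - 2 * i) * (1 - μ ^ 2) ^ i))) =
          Q.coeff (n - 2 * j) * ∑ i ∈ Finset.range (n / 2 + 1),
          ((j.choose i : ℝ) * (μ ^ (n - 2 * i) * (1 - μ ^ 2) ^ i)) from (Finset.mul_sum _ _ _).symm]
      have hsub : ∑ i ∈ Finset.range (n / 2 + 1),
          ((j.choose i : ℝ) * (μ ^ (n - 2 * i) * (1 - μ ^ 2) ^ i)) =
          ∑ i ∈ Finset.range (j + 1),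
          ((j.choose i : ℝ) * (μ ^ (n - 2 * i) * (1 - μ ^ 2) ^ i)) := by
        symm
        apply Finset.sum_subset
        · apply Finset.range_subset_range.2
          rw [Finset.mem_range] at hj
          omega
        · intro i _ hi
          rw [Finset.mem_range, not_lt] at hi
          rw [Nat.choose_eq_zero_of_lt (by omega), Nat.cast_zero, zero_mul]
      rw [hsub, ← hpow μ j hj]
    rw [Finset.sum_congr rfl step, Finset.mul_sum]
    simp_rw [Finset.mul_sum]
    rw [Finset.sum_comm]
    apply Finset.sum_congr rfl
    intro i _
    rw [Finset.sum_mul, Finset.sum_mul]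
    apply Finset.sum_congr rfl
    intro j _
    ring
  refine ⟨⟨fun i => (-1 : ℝ) ^ n * ∑ j ∈ Finset.range (n / 2 + 1),
      Q.coeff (n - 2 * j) * (j.choose i : ℝ), ?_⟩, ?_, ?_⟩
  · intro μ hμ
    rw [hIA μ, if_pos hμ, hQev μ, key μ]
  · intro μ hμ
    rw [hIA μ, if_neg (by simp only [Set.mem_Ioo, not_and_or, not_lt]; left; linarith)]
  · -- the limit at 1
    have hfac : P = C ((-1 : ℝ) ^ n) * ((X - C 1) ^ n * (X + C 1) ^ n) := by
      rw [hP, map_pow, ← mul_pow, ← mul_pow]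
      congr 1
      simp only [map_one, map_neg]
      ring
    have hQ1 : Q.eval 1 = (-1 : ℝ) ^ n * (n.factorial * 2 ^ n) := by
      rw [hQ, hfac, Polynomial.iterate_derivative_C_mul, eval_mul, eval_C]
      congr 1
      rw [Polynomial.iterate_derivative_mul, eval_finset_sum]
      rw [Finset.sum_eq_single 0]
      · simp only [Nat.choose_zero_right, one_smul, Nat.sub_zero, Function.iterate_zero, id_eq]
        rw [Polynomial.iterate_derivative_X_sub_pow_self]
        simp only [eval_mul, eval_natCast, eval_pow, eval_add, eval_X, eval_C]
        norm_num
      · intro i hi hne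
        rw [Finset.mem_range] at hi
        rw [Polynomial.iterate_derivative_X_sub_pow]
        have he : n - (n - i) = i := by omega
        rw [he, smul_mul_assoc]
        simp [zero_pow hne]
      · intro h
        exact absurd (Finset.mem_range.2 (by omega)) h
    have hval : c * ((-1 : ℝ) ^ n * Q.eval 1) = 1 / 2 := by
      rw [hQ1, hc]
      have hg : Real.Gamma ((n : ℝ) + 1) = n.factorial := Real.Gamma_nat_eq_factorial n
      have h2 : (2 : ℝ) ^ (-((n : ℝ) + 1)) = ((2 : ℝ) ^ (n + 1 : ℕ))⁻¹ := by
        rw [← Real.rpow_natCast 2 (n + 1), ← Real.rpow_neg (by norm_num)]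
        norm_num
      rw [hg, h2]
      have hfne : (n.factorial : ℝ) ≠ 0 := Nat.cast_ne_zero.2 n.factorial_ne_zero
      have h2ne : ((2 : ℝ) ^ n) ≠ 0 := by positivity
      have hsq : ((-1 : ℝ) ^ n) * ((-1 : ℝ) ^ n) = 1 := by
        rw [← pow_add]; exact Even.neg_one_pow ⟨n, rfl⟩
      have hone : (-1 : ℝ) ^ n * ((-1 : ℝ) ^ n * ((n.factorial : ℝ) * 2 ^ n)) =
          (n.factorial : ℝ) * 2 ^ n := by
        rw [← mul_assoc, hsq, one_mul]
      rw [hone, pow_succ]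
      field_simp
    have hcont : Continuous fun μ : ℝ => c * ((-1 : ℝ) ^ n * Q.eval μ) :=
      continuous_const.mul (continuous_const.mul (Polynomial.continuous Q))
    have htend : Tendsto (fun μ : ℝ => c * ((-1 : ℝ) ^ n * Q.eval μ)) (𝓝[<] (1 : ℝ))
        (𝓝 (1 / 2)) := by
      have h := (hcont.tendsto 1).mono_left (nhdsWithin_le_nhds (s := Set.Iio (1 : ℝ)))
      rwa [hval] at h
    apply htend.congr'
    filter_upwards [Ioo_mem_nhdsLT_of_mem
      (show (1 : ℝ) ∈ Set.Ioc (-1 : ℝ) 1 by constructor <;> norm_num)] with μ hμ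
    exact (hIA' μ hμ).symm
end

section
/- Let A ∈ (1,3), write A = 1 + 2θ with θ ∈ (0,1). Then for −1 < μ < 1, I_A(μ) = (2^{−θ}/(Γ(θ)Γ(1−θ))) ∫_μ^1 (λ−μ)^{−θ}(1−λ²)^{θ−1} dλ, and lim_{μ→1⁻} I_A(μ) = 1/2. -/
/-!
Restricted to `(-1, 1)`, the cut-off `if 0 < l - μ` turns `I_A(μ)` into an integral over `(μ, 1)`.
Substituting `l = (1 - μ) σ + μ` gives `∫₀¹ σ^(-θ) (1 - σ)^(θ-1) ((1 + μ) + (1 - μ) σ)^(θ-1) dσ`,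
whose last factor lies in `(0, 1]` for `μ ≥ 0` and tends to `2^(θ-1)` as `μ → 1`. Dominated
convergence against the Beta integrand, with `B(1 - θ, θ) = Γ(1 - θ) Γ(θ)`, gives the limit
`2^(-θ) · 2^(θ-1) = 1/2`.
-/

open Real MeasureTheory Filter Topology

lemma ofReal_betaIntegrand {a b x : ℝ} (hx : x ∈ Set.Icc (0 : ℝ) 1) :
    (x : ℂ) ^ ((a : ℂ) - 1) * (1 - (x : ℂ)) ^ ((b : ℂ) - 1)
      = ((x ^ (a - 1) * (1 - x) ^ (b - 1) : ℝ) : ℂ) := by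
  have h1 : (1 : ℂ) - x = ((1 - x : ℝ) : ℂ) := by push_cast; ring
  rw [h1, ← Complex.ofReal_one, ← Complex.ofReal_sub, ← Complex.ofReal_sub,
    ← Complex.ofReal_cpow hx.1, ← Complex.ofReal_cpow (sub_nonneg.2 hx.2),
    ← Complex.ofReal_mul]

lemma integrableOn_rpow_mul_one_sub_rpow {a b : ℝ} (ha : 0 < a) (hb : 0 < b) :
    IntegrableOn (fun x : ℝ => x ^ (a - 1) * (1 - x) ^ (b - 1)) (Set.Ioo 0 1) := by
  have hC := (intervalIntegrable_iff_integrableOn_Ioo_of_le zero_le_one).mp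
    (Complex.betaIntegral_convergent (u := a) (v := b) (by simpa) (by simpa))
  have hR : IntegrableOn (fun x : ℝ => ((x ^ (a - 1) * (1 - x) ^ (b - 1) : ℝ) : ℂ))
      (Set.Ioo 0 1) :=
    hC.congr_fun (fun x hx => ofReal_betaIntegrand (Set.Ioo_subset_Icc_self hx)) measurableSet_Ioo
  simpa [IntegrableOn] using hR.re

lemma integral_rpow_mul_one_sub_rpow {a b : ℝ} (ha : 0 < a) (hb : 0 < b) :
    ∫ x in Set.Ioo (0 : ℝ) 1, x ^ (a - 1) * (1 - x) ^ (b - 1)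
      = Gamma a * Gamma b / Gamma (a + b) := by
  have h := Complex.betaIntegral_eq_Gamma_mul_div a b (by simpa) (by simpa)
  rw [Complex.betaIntegral, intervalIntegral.integral_congr
      (g := fun x : ℝ => ((x ^ (a - 1) * (1 - x) ^ (b - 1) : ℝ) : ℂ))
      (fun x hx => ofReal_betaIntegrand (by rwa [Set.uIcc_of_le zero_le_one] at hx)),
    intervalIntegral.integral_ofReal, intervalIntegral.integral_of_le zero_le_one,
    integral_Ioc_eq_integral_Ioo, ← Complex.ofReal_add, Complex.Gamma_ofReal,
    Complex.Gamma_ofReal, Complex.Gamma_ofReal] at h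
  exact_mod_cast h

lemma setIntegral_Ioo_ite_sub_pos_mul {a b μ : ℝ} (ha : a ≤ μ) (f g : ℝ → ℝ) :
    ∫ l in Set.Ioo a b, (if 0 < l - μ then f l else 0) * g l
      = ∫ l in Set.Ioo μ b, f l * g l := by
  have hind : (fun l => (if 0 < l - μ then f l else 0) * g l)
      = (Set.Ioi μ).indicator (fun l => f l * g l) := by
    ext l
    simp only [Set.indicator_apply, Set.mem_Ioi, sub_pos]
    split_ifs <;> simp
  rw [hind, setIntegral_indicator measurableSet_Ioi, Set.Ioo_inter_Ioi, max_eq_right ha]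

-- The integrand of `∫_μ^1 (l - μ)^(-θ) (1 - l²)^(θ-1) dl` after the substitution
-- `l = (1 - μ) σ + μ`, which factors `1 - l²` as `(1 - μ)(1 - σ) · ((1 + μ) + (1 - μ) σ)`.
noncomputable def betaWeight (θ μ σ : ℝ) : ℝ :=
  σ ^ (-θ) * (1 - σ) ^ (θ - 1) * ((1 + μ) + (1 - μ) * σ) ^ (θ - 1)

lemma integral_Ioo_sub_rpow_mul_one_sub_sq_rpow (θ : ℝ) {μ : ℝ} (hμ₁ : -1 ≤ μ)
    (hμ₂ : μ < 1) :
    ∫ l in Set.Ioo μ 1, (l - μ) ^ (-θ) * (1 - l ^ 2) ^ (θ - 1)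
      = ∫ σ in Set.Ioo (0 : ℝ) 1, betaWeight θ μ σ := by
  have hc : 0 < 1 - μ := sub_pos.2 hμ₂
  have hpoint : ∀ σ ∈ Set.Ioo (0 : ℝ) 1,
      ((1 - μ) * σ + μ - μ) ^ (-θ) * (1 - ((1 - μ) * σ + μ) ^ 2) ^ (θ - 1)
        = (1 - μ)⁻¹ * betaWeight θ μ σ := by
    rintro σ ⟨hσ₀, hσ₁⟩
    have hplus : 0 ≤ (1 + μ) + (1 - μ) * σ := by nlinarith
    have hscale : (1 - μ) ^ (-θ) * (1 - μ) ^ (θ - 1) = (1 - μ)⁻¹ := by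
      rw [← rpow_add hc, show -θ + (θ - 1) = -1 by ring, rpow_neg_one]
    rw [show (1 - μ) * σ + μ - μ = (1 - μ) * σ by ring,
      show 1 - ((1 - μ) * σ + μ) ^ 2 = (1 - μ) * (1 - σ) * ((1 + μ) + (1 - μ) * σ) by ring,
      mul_rpow hc.le hσ₀.le, mul_rpow (mul_nonneg hc.le (by linarith)) hplus,
      mul_rpow hc.le (by linarith), ← hscale, betaWeight]
    ring
  have hsubst := intervalIntegral.smul_integral_comp_mul_add
    (a := 0) (b := 1) (fun l => (l - μ) ^ (-θ) * (1 - l ^ 2) ^ (θ - 1)) (1 - μ) μ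
  simp only [mul_zero, zero_add, mul_one, sub_add_cancel, smul_eq_mul] at hsubst
  rw [intervalIntegral.integral_of_le hμ₂.le, intervalIntegral.integral_of_le zero_le_one,
    integral_Ioc_eq_integral_Ioo, integral_Ioc_eq_integral_Ioo,
    setIntegral_congr_fun measurableSet_Ioo hpoint, integral_const_mul] at hsubst
  rw [← hsubst, ← mul_assoc, mul_inv_cancel₀ hc.ne', one_mul]

lemma norm_betaWeight_le {θ μ σ : ℝ} (hθ : θ ≤ 1) (hμ : 0 ≤ μ)
    (hσ : σ ∈ Set.Icc (0 : ℝ) 1) :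
    ‖betaWeight θ μ σ‖ ≤ σ ^ (-θ) * (1 - σ) ^ (θ - 1) := by
  obtain ⟨hσ₀, hσ₁⟩ := hσ
  have hbase : 1 ≤ (1 + μ) + (1 - μ) * σ := by nlinarith
  have hfactor : 0 ≤ σ ^ (-θ) * (1 - σ) ^ (θ - 1) := by
    have := sub_nonneg.2 hσ₁
    positivity
  rw [Real.norm_of_nonneg (by unfold betaWeight; positivity)]
  exact mul_le_of_le_one_right hfactor (rpow_le_one_of_one_le_of_nonpos hbase (by linarith))

lemma tendsto_integral_betaWeight {θ : ℝ} (hθ₀ : 0 < θ) (hθ₁ : θ < 1) :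
    Tendsto (fun μ => ∫ σ in Set.Ioo (0 : ℝ) 1, betaWeight θ μ σ) (𝓝[<] 1)
      (𝓝 (Gamma (1 - θ) * Gamma θ * 2 ^ (θ - 1))) := by
  have hB := integral_rpow_mul_one_sub_rpow (sub_pos.2 hθ₁) hθ₀
  have hBint := integrableOn_rpow_mul_one_sub_rpow (sub_pos.2 hθ₁) hθ₀
  simp only [sub_sub_cancel_left, sub_add_cancel, Gamma_one, div_one] at hB hBint
  rw [← hB, ← integral_mul_const]
  have hμ : ∀ᶠ μ in 𝓝[<] (1 : ℝ), 0 ≤ μ :=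
    mem_of_superset (Ico_mem_nhdsLT zero_lt_one) fun _ h => h.1
  refine tendsto_integral_filter_of_dominated_convergence
    (fun σ => σ ^ (-θ) * (1 - σ) ^ (θ - 1))
    (Eventually.of_forall fun μ =>
      (by unfold betaWeight; fun_prop : Measurable (betaWeight θ μ)).aestronglyMeasurable)
    ?_ hBint ?_
  · filter_upwards [hμ] with μ hμ
    filter_upwards [ae_restrict_mem measurableSet_Ioo] with σ hσ
    exact norm_betaWeight_le hθ₁.le hμ (Set.Ioo_subset_Icc_self hσ)
  · refine Eventually.of_forall fun σ => tendsto_nhdsWithin_of_tendsto_nhds ?_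
    have hcont : ContinuousAt (fun μ => betaWeight θ μ σ) 1 := by
      unfold betaWeight
      exact continuousAt_const.mul
        (ContinuousAt.rpow_const (by fun_prop) (Or.inl (by norm_num)))
    convert hcont.tendsto using 2
    norm_num [betaWeight]

/-- For `A = 1 + 2θ` with `θ ∈ (0,1)`, the kernel `I_A` restricted to
`(-1,1)` has the explicit form
`(2^{-θ}/(Γ(θ)Γ(1-θ))) ∫_μ^1 (λ-μ)^{-θ}(1-λ²)^{θ-1} dλ`,
and `I_A(μ) → 1/2` as `μ → 1⁻`. -/
theorem stmt9 (A θ : ℝ) (hθ0 : 0 < θ) (hθ1 : θ < 1) (hA : A = 1 + 2 * θ)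
    (IA : ℝ → ℝ)
    (hIA : ∀ ν : ℝ, IA ν =
      (2 : ℝ) ^ ((1 - A) / 2) / Real.Gamma ((A - 1) / 2) *
        ∫ l in Set.Ioo (-1 : ℝ) 1,
          (if 0 < l - ν then (l - ν) ^ ((1 - A) / 2) / Real.Gamma ((1 - A) / 2 + 1) else 0) *
            (1 - l ^ 2) ^ ((A - 3) / 2)) :
    (∀ μ ∈ Set.Ioo (-1 : ℝ) 1,
      IA μ = (2 : ℝ) ^ (-θ) / (Real.Gamma θ * Real.Gamma (1 - θ)) *
        ∫ l in Set.Ioo μ 1, (l - μ) ^ (-θ) * (1 - l ^ 2) ^ (θ - 1)) ∧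
    Tendsto IA (𝓝[<] 1) (𝓝 (1 / 2)) := by
  have e₁ : (1 - A) / 2 = -θ := by rw [hA]; ring
  have e₂ : (A - 1) / 2 = θ := by rw [hA]; ring
  have e₃ : (A - 3) / 2 = θ - 1 := by rw [hA]; ring
  simp only [e₁, e₂, e₃, neg_add_eq_sub] at hIA
  set c := (2 : ℝ) ^ (-θ) / (Gamma θ * Gamma (1 - θ)) with hc_def
  have hformula : ∀ μ ∈ Set.Ioo (-1 : ℝ) 1,
      IA μ = c * ∫ l in Set.Ioo μ 1, (l - μ) ^ (-θ) * (1 - l ^ 2) ^ (θ - 1) := by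
    intro μ hμ
    rw [hIA μ, setIntegral_Ioo_ite_sub_pos_mul hμ.1.le]
    simp only [div_mul_eq_mul_div, integral_div, hc_def]
    ring
  refine ⟨hformula, ?_⟩
  have hev : (fun μ => c * ∫ σ in Set.Ioo (0 : ℝ) 1, betaWeight θ μ σ) =ᶠ[𝓝[<] 1] IA := by
    filter_upwards [Ioo_mem_nhdsLT (show (-1 : ℝ) < 1 by norm_num)] with μ hμ
    rw [hformula μ hμ, integral_Ioo_sub_rpow_mul_one_sub_sq_rpow θ hμ.1.le hμ.2]
  have hlimit : c * (Gamma (1 - θ) * Gamma θ * 2 ^ (θ - 1)) = 1 / 2 := by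
    have hΓ₀ := (Gamma_pos_of_pos hθ0).ne'
    have hΓ₁ := (Gamma_pos_of_pos (sub_pos.2 hθ1)).ne'
    have h2 : (2 : ℝ) ^ (-θ) * 2 ^ (θ - 1) = 1 / 2 := by
      rw [← rpow_add two_pos, show -θ + (θ - 1) = -1 by ring, rpow_neg_one, one_div]
    rw [← h2, hc_def]
    field_simp
  rw [← hlimit]
  exact ((tendsto_integral_betaWeight hθ0 hθ1).const_mul c).congr' hev
end

section
/- Let A ∈ [2,3), θ = (A−1)/2. There exists a constant C₀ such that for −2 < μ < 1, |I_A(μ) − C₀ ln|1+μ|| is bounded uniformly; in particular I_A(μ) = O(|ln|1+μ|| + 1) on (−2,1). -/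
/-!
Write `a = |1 + μ|` and `(1 - l²) ^ (θ - 1) = (1 + l) ^ (θ - 1) (1 - l) ^ (θ - 1)`. Near `l = -1`
the factor `(1 - l) ^ (θ - 1)` is `2 ^ (θ - 1) + O(1 + l)`, and as soon as `1 + l` and `l - μ`
are comparable, `(l - μ) ^ (-θ) (1 + l) ^ (θ - 1)` differs from `1 / max (1 + l) (l - μ)` by
`O(a / (1 + l)²)`, which integrates to `O(1)`. Since `max (1 + l) (l - μ) = l + max 1 (-μ)`, the
integral of the reciprocal up to `l = 0` is `-log a + O(1)`. The remaining pieces, where the two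
singular factors collide at the lower endpoint and near `l = 1`, are bounded by explicit Beta-type
integrals; for `μ ≥ -1/2` the whole integral is bounded. Hence
`C₀ = -2 ^ (θ - 1) 2 ^ (-θ) / (Γ(θ) Γ(1 - θ))`.
-/

open Real MeasureTheory Set intervalIntegral

section PowerSingularities

variable {f g : ℝ → ℝ} {s t p K : ℝ}

lemma intervalIntegrable_of_eq_rpow_sub_left_mul (hst : s ≤ t) (hp : -1 < p)
    (hg : ContinuousOn g (Icc s t)) (hf : ∀ x ∈ Ioo s t, f x = (x - s) ^ p * g x) :
    IntervalIntegrable f volume s t := by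
  have h := (intervalIntegrable_rpow' (a := s - s) (b := t - s) hp).comp_sub_right s
  rw [sub_add_cancel, sub_add_cancel] at h
  have hfg := h.mul_continuousOn (g := g) (by rwa [uIcc_of_le hst])
  rw [intervalIntegrable_iff_integrableOn_Ioo_of_le hst] at hfg ⊢
  exact hfg.congr_fun (fun x hx => (hf x hx).symm) measurableSet_Ioo

lemma intervalIntegrable_of_eq_rpow_sub_right_mul (hst : s ≤ t) (hp : -1 < p)
    (hg : ContinuousOn g (Icc s t)) (hf : ∀ x ∈ Ioo s t, f x = (t - x) ^ p * g x) :
    IntervalIntegrable f volume s t := by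
  have h := (intervalIntegrable_rpow' (a := t - t) (b := t - s) hp).comp_sub_left t
  rw [sub_sub_cancel, sub_sub_cancel] at h
  have hfg := h.symm.mul_continuousOn (g := g) (by rwa [uIcc_of_le hst])
  rw [intervalIntegrable_iff_integrableOn_Ioo_of_le hst] at hfg ⊢
  exact hfg.congr_fun (fun x hx => (hf x hx).symm) measurableSet_Ioo

lemma integral_rpow_sub_left (hp : -1 < p) :
    ∫ x in s..t, (x - s) ^ p = (t - s) ^ (p + 1) / (p + 1) := by
  rw [integral_comp_sub_right (· ^ p), sub_self, integral_rpow (Or.inl hp),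
    zero_rpow (by linarith), sub_zero]

lemma integral_rpow_sub_right (hp : -1 < p) :
    ∫ x in s..t, (t - x) ^ p = (t - s) ^ (p + 1) / (p + 1) := by
  rw [integral_comp_sub_left (· ^ p), sub_self, integral_rpow (Or.inl hp),
    zero_rpow (by linarith), sub_zero]

lemma integral_le_of_le_mul_rpow_sub_left (hst : s ≤ t) (hp : -1 < p)
    (hf : IntervalIntegrable f volume s t) (hle : ∀ x ∈ Ioo s t, f x ≤ K * (x - s) ^ p) :
    ∫ x in s..t, f x ≤ K * (t - s) ^ (p + 1) / (p + 1) := by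
  have hK : IntervalIntegrable (fun x => K * (x - s) ^ p) volume s t :=
    intervalIntegrable_of_eq_rpow_sub_left_mul hst hp continuousOn_const fun _ _ => mul_comm _ _
  calc ∫ x in s..t, f x ≤ ∫ x in s..t, K * (x - s) ^ p := integral_mono_on_of_le_Ioo hst hf hK hle
    _ = K * (t - s) ^ (p + 1) / (p + 1) := by
      rw [intervalIntegral.integral_const_mul, integral_rpow_sub_left hp, mul_div_assoc]

lemma integral_le_of_le_mul_rpow_sub_right (hst : s ≤ t) (hp : -1 < p)
    (hf : IntervalIntegrable f volume s t) (hle : ∀ x ∈ Ioo s t, f x ≤ K * (t - x) ^ p) :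
    ∫ x in s..t, f x ≤ K * (t - s) ^ (p + 1) / (p + 1) := by
  have hK : IntervalIntegrable (fun x => K * (t - x) ^ p) volume s t :=
    intervalIntegrable_of_eq_rpow_sub_right_mul hst hp continuousOn_const fun _ _ => mul_comm _ _
  calc ∫ x in s..t, f x ≤ ∫ x in s..t, K * (t - x) ^ p := integral_mono_on_of_le_Ioo hst hf hK hle
    _ = K * (t - s) ^ (p + 1) / (p + 1) := by
      rw [intervalIntegral.integral_const_mul, integral_rpow_sub_right hp, mul_div_assoc]

end PowerSingularities

lemma abs_rpow_neg_mul_rpow_sub_one_sub_inv_le {u v s : ℝ} (hv : 0 < v) (hvu : v ≤ u)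
    (hs0 : 0 ≤ s) (hs1 : s ≤ 1) :
    |v ^ (-s) * u ^ (s - 1) - u⁻¹| ≤ (u - v) / (u * v) := by
  have hu : 0 < u := hv.trans_le hvu
  have hratio : 1 ≤ u / v := (one_le_div hv).2 hvu
  have hform : v ^ (-s) * u ^ (s - 1) = u⁻¹ * (u / v) ^ s := by
    rw [div_rpow hu.le hv.le, rpow_sub_one hu.ne', rpow_neg hv.le]
    field_simp
  have hlow : u⁻¹ ≤ u⁻¹ * (u / v) ^ s :=
    le_mul_of_one_le_right (inv_nonneg.2 hu.le) (one_le_rpow hratio hs0)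
  rw [hform, abs_of_nonneg (sub_nonneg.2 hlow)]
  calc u⁻¹ * (u / v) ^ s - u⁻¹ ≤ u⁻¹ * (u / v) - u⁻¹ := by
        gcongr
        exact rpow_le_self_of_one_le hratio hs1
    _ = (u - v) / (u * v) := by field_simp

lemma abs_rpow_sub_one_sub_two_rpow_le {x θ : ℝ} (hθ0 : 0 ≤ θ) (hθ1 : θ ≤ 1) (h1 : 1 ≤ x)
    (h2 : x ≤ 2) : |x ^ (θ - 1) - 2 ^ (θ - 1)| ≤ 2 - x := by
  have hx : 0 < x := by linarith
  have hanti : (2 : ℝ) ^ (θ - 1) ≤ x ^ (θ - 1) := rpow_le_rpow_of_nonpos hx h2 (by linarith)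
  have hle1 : x ^ (θ - 1) ≤ 1 := rpow_le_one_of_one_le_of_nonpos h1 (by linarith)
  have hmono : x ^ (θ - 1) * x ≤ 2 ^ (θ - 1) * 2 := by
    rw [← rpow_add_one hx.ne', ← rpow_add_one two_ne_zero, sub_add_cancel]
    exact rpow_le_rpow hx.le h2 hθ0
  rw [abs_of_nonneg (sub_nonneg.2 hanti)]
  nlinarith

lemma rpow_le_two_of_half_le {x p : ℝ} (hx : 1 / 2 ≤ x) (hp : -1 ≤ p) (hp0 : p ≤ 0) :
    x ^ p ≤ 2 :=
  calc x ^ p ≤ (1 / 2) ^ p := rpow_le_rpow_of_nonpos (by norm_num) hx hp0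
    _ ≤ (1 / 2) ^ (-1 : ℝ) := rpow_le_rpow_of_exponent_ge (by norm_num) (by norm_num) hp
    _ = 2 := by norm_num

lemma integral_const_div_add {c e m : ℝ} (he : 0 < e) (hme : 0 < m + e) :
    ∫ l in m..0, c / (l + e) = c * (log e - log (m + e)) := by
  simp_rw [div_eq_mul_inv]
  rw [intervalIntegral.integral_const_mul, integral_comp_add_right (fun x => x⁻¹), zero_add,
    integral_inv_of_pos hme he, log_div he.ne' hme.ne']

lemma integral_add_one_zpow_neg_two {m : ℝ} (hm : -1 < m) (hm0 : m ≤ 0) :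
    ∫ l in m..0, (l + 1) ^ (-2 : ℤ) = (m + 1)⁻¹ - 1 := by
  rw [integral_comp_add_right (fun x : ℝ => x ^ (-2 : ℤ)), zero_add,
    integral_zpow (Or.inr ⟨by norm_num, fun h => ?_⟩)]
  · norm_num
    ring
  · rw [uIcc_of_le (by linarith)] at h
    linarith [h.1]

lemma abs_two_rpow_mul_log_le_one {θ x : ℝ} (hθ1 : θ ≤ 1) (h1 : 1 / 2 ≤ x) (h2 : x ≤ 2) :
    |2 ^ (θ - 1) * log x| ≤ 1 := by
  have hx : 0 < x := by linarith
  have hinv : x⁻¹ ≤ 2 := by rw [inv_le_comm₀ hx two_pos]; linarith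
  have hlog : |log x| ≤ 1 := abs_le.2
    ⟨by linarith [one_sub_inv_le_log_of_pos hx], by linarith [log_le_sub_one_of_pos hx]⟩
  rw [abs_mul, abs_of_pos (rpow_pos_of_pos two_pos _)]
  exact mul_le_one₀ (rpow_le_one_of_one_le_of_nonpos one_le_two (by linarith)) (abs_nonneg _) hlog

-- Both branches of `I_A` integrate `kernel θ μ` over `(max μ (-1), 1)`; `kernelIntegral` is that
-- integral, so `I_A = 2 ^ (-θ) / (Γ(θ) Γ(1 - θ)) * kernelIntegral θ μ`.
noncomputable def kernel (θ μ l : ℝ) : ℝ := (l - μ) ^ (-θ) * (1 - l ^ 2) ^ (θ - 1)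

noncomputable def kernelIntegral (θ μ : ℝ) : ℝ := ∫ l in max μ (-1)..1, kernel θ μ l

section Kernel

variable {θ μ l m w : ℝ}

lemma kernel_eq_mul (hl : -1 ≤ l) (hl1 : l ≤ 1) :
    kernel θ μ l = (l - μ) ^ (-θ) * (1 + l) ^ (θ - 1) * (1 - l) ^ (θ - 1) := by
  rw [kernel, show 1 - l ^ 2 = (1 + l) * (1 - l) by ring,
    mul_rpow (by linarith) (by linarith), mul_assoc]

lemma kernel_nonneg (hμl : μ ≤ l) (hl : -1 ≤ l) (hl1 : l ≤ 1) : 0 ≤ kernel θ μ l :=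
  mul_nonneg (rpow_nonneg (by linarith) _) (rpow_nonneg (by nlinarith) _)

lemma intervalIntegrable_kernel_right (hθ0 : 0 < θ) (hμw : μ < w) (hw : -1 < w) (hw1 : w ≤ 1) :
    IntervalIntegrable (kernel θ μ) volume w 1 := by
  refine intervalIntegrable_of_eq_rpow_sub_right_mul (p := θ - 1)
    (g := fun l => (l - μ) ^ (-θ) * (1 + l) ^ (θ - 1)) hw1 (by linarith) ?_
    fun l hl => by rw [kernel_eq_mul (by linarith [hl.1]) hl.2.le]; ring
  refine ContinuousOn.mul ?_ ?_ <;> refine ContinuousOn.rpow_const (by fun_prop) fun l hl => ?_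
  · exact Or.inl (by linarith [hl.1])
  · exact Or.inl (by linarith [hl.1])

lemma intervalIntegrable_kernel (hθ0 : 0 < θ) (hθ1 : θ < 1) (hμ : μ ≠ -1) (hμ1 : μ < 1) :
    IntervalIntegrable (kernel θ μ) volume (max μ (-1)) 1 := by
  set b := max μ (-1)
  have hb1 : b < 1 := max_lt hμ1 (by norm_num)
  have hμb : μ ≤ b := le_max_left _ _
  have hb' : -1 ≤ b := le_max_right _ _
  refine IntervalIntegrable.trans (b := (b + 1) / 2) ?_
    (intervalIntegrable_kernel_right hθ0 (by linarith) (by linarith) (by linarith))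
  rcases hμ.lt_or_gt with hμ | hμ
  · have hb : b = -1 := max_eq_right hμ.le
    refine intervalIntegrable_of_eq_rpow_sub_left_mul (p := θ - 1)
      (g := fun l => (l - μ) ^ (-θ) * (1 - l) ^ (θ - 1)) (by linarith) (by linarith) ?_
      fun l hl => by
        rw [kernel_eq_mul (by linarith [hl.1]) (by linarith [hl.2]), hb, sub_neg_eq_add, add_comm l]
        ring
    refine ContinuousOn.mul ?_ ?_ <;> refine ContinuousOn.rpow_const (by fun_prop) fun l hl => ?_
    · exact Or.inl (by linarith [hl.1])
    · exact Or.inl (by linarith [hl.2])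
  · have hb : b = μ := max_eq_left hμ.le
    refine intervalIntegrable_of_eq_rpow_sub_left_mul (p := -θ)
      (g := fun l => (1 - l ^ 2) ^ (θ - 1)) (by linarith) (by linarith) ?_
      fun l _ => by rw [hb]; rfl
    refine ContinuousOn.rpow_const (by fun_prop) fun l hl => Or.inl ?_
    have := hl.1; have := hl.2
    nlinarith

lemma intervalIntegrable_kernel_of_le {s t : ℝ} (hθ0 : 0 < θ) (hθ1 : θ < 1) (hμ : μ ≠ -1)
    (hμ1 : μ < 1) (hs : max μ (-1) ≤ s) (hst : s ≤ t) (ht : t ≤ 1) :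
    IntervalIntegrable (kernel θ μ) volume s t :=
  (intervalIntegrable_kernel hθ0 hθ1 hμ hμ1).mono_set <| by
    rw [uIcc_of_le hst, uIcc_of_le (max_le hμ1.le (by norm_num))]
    exact Icc_subset_Icc hs ht

lemma integral_kernel_le_of_neg_one_lt (hθ0 : 0 < θ) (hθ1 : θ < 1) (hμ : -1 < μ) (hμw : μ ≤ w)
    (hw : w < 1) :
    ∫ l in μ..w, kernel θ μ l ≤ ((1 + μ) * (1 - w)) ^ (θ - 1) * (w - μ) ^ (1 - θ) / (1 - θ) := by
  have h := integral_le_of_le_mul_rpow_sub_left (K := ((1 + μ) * (1 - w)) ^ (θ - 1)) hμw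
    (by linarith : -1 < -θ)
    (intervalIntegrable_kernel_of_le hθ0 hθ1 hμ.ne' (by linarith) (max_le le_rfl hμ.le) hμw hw.le)
    fun l hl => by
      obtain ⟨hl1, hl2⟩ := hl
      rw [kernel_eq_mul (by linarith) (by linarith), mul_rpow (by linarith) (by linarith),
        mul_comm _ ((l - μ) ^ (-θ)), mul_assoc]
      gcongr ((l - μ) ^ (-θ)) * ?_
      exact mul_le_mul (rpow_le_rpow_of_nonpos (by linarith) (by linarith) (by linarith))
        (rpow_le_rpow_of_nonpos (by linarith) (by linarith) (by linarith))
        (rpow_nonneg (by linarith) _) (rpow_nonneg (by linarith) _)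
  rwa [show -θ + 1 = 1 - θ by ring] at h

lemma integral_kernel_le_of_lt_neg_one (hθ0 : 0 < θ) (hθ1 : θ < 1) (hμ : μ < -1) (hw : -1 ≤ w)
    (hw1 : w < 1) :
    ∫ l in (-1)..w, kernel θ μ l ≤ (-1 - μ) ^ (-θ) * (1 - w) ^ (θ - 1) * (w + 1) ^ θ / θ := by
  have h := integral_le_of_le_mul_rpow_sub_left (K := (-1 - μ) ^ (-θ) * (1 - w) ^ (θ - 1)) hw
    (by linarith : -1 < θ - 1)
    (intervalIntegrable_kernel_of_le hθ0 hθ1 hμ.ne (by linarith) (max_le hμ.le le_rfl) hw hw1.le)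
    fun l hl => by
      obtain ⟨hl1, hl2⟩ := hl
      rw [kernel_eq_mul (by linarith) (by linarith), sub_neg_eq_add, add_comm l,
        mul_right_comm _ ((1 + l) ^ (θ - 1))]
      have h1 : (l - μ) ^ (-θ) ≤ (-1 - μ) ^ (-θ) :=
        rpow_le_rpow_of_nonpos (by linarith) (by linarith) (by linarith)
      have h2 : (1 - l) ^ (θ - 1) ≤ (1 - w) ^ (θ - 1) :=
        rpow_le_rpow_of_nonpos (by linarith) (by linarith) (by linarith)
      exact mul_le_mul_of_nonneg_right
        (mul_le_mul h1 h2 (rpow_nonneg (by linarith) _) (rpow_nonneg (by linarith) _))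
        (rpow_nonneg (by linarith) _)
  rwa [sub_neg_eq_add, sub_add_cancel] at h

lemma integral_kernel_right_le (hθ0 : 0 < θ) (hθ1 : θ < 1) (hμw : μ < w) (hw : 0 ≤ w)
    (hw1 : w ≤ 1) :
    ∫ l in w..1, kernel θ μ l ≤ (w - μ) ^ (-θ) * (1 - w) ^ θ / θ := by
  have h := integral_le_of_le_mul_rpow_sub_right (K := (w - μ) ^ (-θ)) hw1
    (by linarith : -1 < θ - 1) (intervalIntegrable_kernel_right hθ0 hμw (by linarith) hw1)
    fun l hl => by
      obtain ⟨hl1, hl2⟩ := hl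
      rw [kernel_eq_mul (by linarith) (by linarith)]
      gcongr ?_ * _
      calc (l - μ) ^ (-θ) * (1 + l) ^ (θ - 1) ≤ (w - μ) ^ (-θ) * 1 :=
            mul_le_mul (rpow_le_rpow_of_nonpos (by linarith) (by linarith) (by linarith))
              (rpow_le_one_of_one_le_of_nonpos (by linarith) (by linarith))
              (rpow_nonneg (by linarith) _) (rpow_nonneg (by linarith) _)
        _ = (w - μ) ^ (-θ) := mul_one _
  rwa [sub_add_cancel] at h

lemma abs_kernel_sub_inv_le (hθ0 : 0 < θ) (hθ1 : θ < 1) (hl : -1 < l) (hl0 : l ≤ 0)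
    (hμl : μ < l) :
    |kernel θ μ l - 2 ^ (θ - 1) / (l + max 1 (-μ))| ≤ |1 + μ| / ((1 + l) * (l - μ)) + 1 := by
  set u := l + max 1 (-μ) with hu
  have hx : 0 < 1 + l := by linarith
  have hxu : 1 + l ≤ u := by rw [hu]; linarith [le_max_left 1 (-μ)]
  have hfac : (1 - l) ^ (θ - 1) ≤ 1 := rpow_le_one_of_one_le_of_nonpos (by linarith) (by linarith)
  have hchord : |(1 - l) ^ (θ - 1) - 2 ^ (θ - 1)| ≤ 1 + l := by
    have := abs_rpow_sub_one_sub_two_rpow_le hθ0.le hθ1.le (x := 1 - l) (by linarith) (by linarith)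
    rwa [show 2 - (1 - l) = 1 + l by ring] at this
  -- `u = max (1 + l) (l - μ)`, and `(l - μ) ^ (-θ) * (1 + l) ^ (θ - 1)` is close to `u⁻¹`
  have hratio : |(l - μ) ^ (-θ) * (1 + l) ^ (θ - 1) - u⁻¹| ≤ |1 + μ| / ((1 + l) * (l - μ)) := by
    rcases le_total μ (-1) with hμ | hμ
    · have hu' : u = l - μ := by rw [hu, max_eq_right (by linarith)]; ring
      have h := abs_rpow_neg_mul_rpow_sub_one_sub_inv_le (u := l - μ) (s := 1 - θ) hx
        (by linarith) (by linarith) (by linarith)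
      rw [show -(1 - θ) = θ - 1 by ring, show 1 - θ - 1 = -θ by ring, mul_comm] at h
      rwa [hu', show |1 + μ| = l - μ - (1 + l) by rw [abs_of_nonpos (by linarith)]; ring,
        mul_comm (1 + l)]
    · have hu' : u = 1 + l := by rw [hu, max_eq_left (by linarith)]; ring
      have h := abs_rpow_neg_mul_rpow_sub_one_sub_inv_le (u := 1 + l) (s := θ) (v := l - μ)
        (by linarith) (by linarith) hθ0.le hθ1.le
      rwa [hu', show |1 + μ| = 1 + l - (l - μ) by rw [abs_of_nonneg (by linarith)]; ring]
  have hsplit : kernel θ μ l - 2 ^ (θ - 1) / u = (1 - l) ^ (θ - 1) *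
      ((l - μ) ^ (-θ) * (1 + l) ^ (θ - 1) - u⁻¹) + ((1 - l) ^ (θ - 1) - 2 ^ (θ - 1)) * u⁻¹ := by
    rw [kernel_eq_mul hl.le (by linarith)]
    ring
  have hu0 : 0 < u := hx.trans_le hxu
  calc |kernel θ μ l - 2 ^ (θ - 1) / u|
      ≤ (1 - l) ^ (θ - 1) * |(l - μ) ^ (-θ) * (1 + l) ^ (θ - 1) - u⁻¹| +
          |(1 - l) ^ (θ - 1) - 2 ^ (θ - 1)| * u⁻¹ := by
        rw [hsplit]
        refine (abs_add_le _ _).trans_eq ?_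
        rw [abs_mul, abs_mul, abs_of_nonneg (rpow_nonneg (by linarith) _),
          abs_of_pos (inv_pos.2 hu0)]
    _ ≤ 1 * (|1 + μ| / ((1 + l) * (l - μ))) + (1 + l) * u⁻¹ := by
        gcongr
    _ ≤ |1 + μ| / ((1 + l) * (l - μ)) + 1 := by
        rw [one_mul, ← div_eq_mul_inv]
        gcongr
        exact (div_le_one hu0).2 hxu

lemma abs_integral_kernel_sub_inv_le (hθ0 : 0 < θ) (hθ1 : θ < 1) (hμ : μ ≠ -1)
    (hm : 1 + 2 * μ ≤ m) (hma : |1 + μ| ≤ 1 + m) (hm0 : m ≤ 0) :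
    |∫ l in m..0, (kernel θ μ l - 2 ^ (θ - 1) / (l + max 1 (-μ)))| ≤ 3 := by
  set a := |1 + μ|
  have ha : 0 < a := abs_pos.2 fun h => hμ (by linarith)
  have hm1 : -1 < m := by linarith
  have hμm : μ < m := by rcases hμ.lt_or_gt with h | h <;> linarith
  have hbound : ∀ l ∈ Ioc m 0, ‖kernel θ μ l - 2 ^ (θ - 1) / (l + max 1 (-μ))‖ ≤
      2 * a * (l + 1) ^ (-2 : ℤ) + 1 := fun l ⟨hl1, hl2⟩ => by
    refine (abs_kernel_sub_inv_le hθ0 hθ1 (by linarith) hl2 (by linarith)).trans ?_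
    have hx : 0 < 1 + l := by linarith
    have hfar : 1 + l ≤ 2 * (l - μ) := by linarith
    rw [zpow_neg, zpow_two, add_comm l, ← div_eq_mul_inv]
    gcongr ?_ + 1
    rw [div_le_div_iff₀ (by nlinarith) (by nlinarith)]
    nlinarith [mul_le_mul_of_nonneg_left hfar (mul_nonneg ha.le hx.le)]
  have hcont₀ : ContinuousOn (fun l : ℝ => (l + 1) ^ (-2 : ℤ)) (uIcc m 0) :=
    (continuousOn_id.add continuousOn_const).zpow₀ _ fun l hl => Or.inl <| by
      rw [uIcc_of_le hm0] at hl
      exact (by linarith [hl.1] : (0 : ℝ) < l + 1).ne'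
  have hcont : ContinuousOn (fun l : ℝ => 2 * a * (l + 1) ^ (-2 : ℤ) + 1) (uIcc m 0) :=
    (continuousOn_const.mul hcont₀).add continuousOn_const
  calc |∫ l in m..0, (kernel θ μ l - 2 ^ (θ - 1) / (l + max 1 (-μ)))|
      ≤ ∫ l in m..0, (2 * a * (l + 1) ^ (-2 : ℤ) + 1) :=
        norm_integral_le_of_norm_le hm0 (ae_of_all _ hbound) hcont.intervalIntegrable
    _ = 2 * a * ((m + 1)⁻¹ - 1) - m := by
        rw [integral_add (hcont₀.intervalIntegrable.const_mul (2 * a))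
          intervalIntegrable_const, intervalIntegral.integral_const_mul,
          integral_add_one_zpow_neg_two hm1 hm0,
          intervalIntegral.integral_const, smul_eq_mul]
        ring
    _ ≤ 3 := by
        have : 2 * a * (m + 1)⁻¹ ≤ 2 := by
          rw [← div_eq_mul_inv, div_le_iff₀ (by linarith)]
          linarith
        nlinarith

lemma integral_kernel_nonneg {s t : ℝ} (hst : s ≤ t) (hs : max μ (-1) ≤ s) (ht : t ≤ 1) :
    0 ≤ ∫ l in s..t, kernel θ μ l :=
  intervalIntegral.integral_nonneg hst fun _ hl =>
    kernel_nonneg ((le_max_left _ _).trans (hs.trans hl.1))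
      ((le_max_right _ _).trans (hs.trans hl.1)) (hl.2.trans ht)

-- At `μ = -1` the kernel is `(1 + l)⁻¹ (1 - l) ^ (θ - 1)`, which is not integrable, so the Bochner
-- integral takes its junk value `0`; this matches `log |1 + μ| = log 0 = 0` in the statement.
lemma kernelIntegral_neg_one (hθ1 : θ ≤ 1) : kernelIntegral θ (-1) = 0 := by
  rw [kernelIntegral, max_self]
  refine integral_undef fun hint => ?_
  have hsub : uIcc (-1 : ℝ) 0 ⊆ uIcc (-1) 1 := by
    rw [uIcc_of_le (by norm_num), uIcc_of_le (by norm_num)]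
    exact Icc_subset_Icc le_rfl (by norm_num)
  have hinv : IntervalIntegrable (fun l : ℝ => (l - -1)⁻¹) volume (-1) 0 := by
    refine ((hint.mono_set hsub).const_mul (2 ^ (1 - θ))).mono_fun' (by fun_prop) ?_
    rw [uIoc_of_le (by norm_num), Filter.EventuallyLE, ae_restrict_iff' measurableSet_Ioc]
    refine ae_of_all _ fun l ⟨hl1, hl2⟩ => ?_
    have hx : 0 < l - -1 := by linarith
    have h2 : (2 : ℝ) ^ (θ - 1) ≤ (1 - l) ^ (θ - 1) :=
      rpow_le_rpow_of_nonpos (by linarith) (by linarith) (by linarith)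
    have hker : kernel θ (-1) l = (l - -1)⁻¹ * (1 - l) ^ (θ - 1) := by
      rw [kernel_eq_mul hl1.le (by linarith), show 1 + l = l - -1 by ring, ← rpow_neg_one,
        ← rpow_add hx]
      ring_nf
    rw [Real.norm_eq_abs, abs_of_pos (inv_pos.2 hx), hker]
    calc (l - -1)⁻¹ = 2 ^ (1 - θ) * ((l - -1)⁻¹ * 2 ^ (θ - 1)) := by
          rw [mul_left_comm, ← rpow_add two_pos]; norm_num
      _ ≤ 2 ^ (1 - θ) * ((l - -1)⁻¹ * (1 - l) ^ (θ - 1)) := by gcongr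
  rw [intervalIntegrable_sub_inv_iff, uIcc_of_le (by norm_num)] at hinv
  norm_num at hinv

lemma kernelIntegral_le_of_neg_half_le (hθ0 : 0 < θ) (hθ1 : θ < 1) (hμ : -1 / 2 ≤ μ)
    (hμ1 : μ < 1) : kernelIntegral θ μ ≤ 2 / (1 - θ) + 1 / θ := by
  set w := (μ + 1) / 2 with hw
  set d := (1 - μ) / 2 with hd
  have hd0 : 0 < d := by linarith
  have hμ' : μ ≠ -1 := by linarith
  rw [kernelIntegral, max_eq_left (by linarith),
    ← integral_add_adjacent_intervals (b := w)
      (intervalIntegrable_kernel_of_le hθ0 hθ1 hμ' hμ1 (max_le le_rfl (by linarith))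
        (by linarith) (by linarith))
      (intervalIntegrable_kernel_right hθ0 (by linarith) (by linarith) (by linarith))]
  have hleft := integral_kernel_le_of_neg_one_lt hθ0 hθ1 (μ := μ) (w := w) (by linarith)
    (by linarith) (by linarith)
  have hright := integral_kernel_right_le hθ0 hθ1 (w := w) (μ := μ) (by linarith) (by linarith)
    (by linarith)
  rw [show 1 - w = d by ring, show w - μ = d by ring, mul_rpow (by linarith) hd0.le, mul_assoc,
    ← rpow_add hd0, show θ - 1 + (1 - θ) = 0 by ring, rpow_zero, mul_one] at hleft
  rw [show 1 - w = d by ring, show w - μ = d by ring, ← rpow_add hd0, neg_add_cancel,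
    rpow_zero] at hright
  have hμθ : (1 + μ) ^ (θ - 1) ≤ 2 :=
    rpow_le_two_of_half_le (by linarith) (by linarith) (by linarith)
  have : (1 + μ) ^ (θ - 1) / (1 - θ) ≤ 2 / (1 - θ) := by gcongr
  linarith

lemma integral_kernel_zero_one_le (hθ0 : 0 < θ) (hθ1 : θ < 1) (hμ : μ ≤ -1 / 2) :
    ∫ l in (0 : ℝ)..1, kernel θ μ l ≤ 2 / θ := by
  have h := integral_kernel_right_le hθ0 hθ1 (w := 0) (by linarith) le_rfl zero_le_one
  have hμθ : (0 - μ) ^ (-θ) ≤ 2 := rpow_le_two_of_half_le (by linarith) (by linarith) (by linarith)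
  rw [sub_zero, one_rpow, mul_one] at h
  exact h.trans (by gcongr)

lemma integral_kernel_le_of_add_abs_le_zero (hθ0 : 0 < θ) (hθ1 : θ < 1) (hμ : μ ≠ -1)
    (hm : max μ (-1) + |1 + μ| ≤ 0) :
    ∫ l in max μ (-1)..max μ (-1) + |1 + μ|, kernel θ μ l ≤ 1 / (1 - θ) + 1 / θ := by
  rcases hμ.lt_or_gt with hμ | hμ
  · rw [max_eq_right hμ.le, abs_of_neg (by linarith)] at hm ⊢
    have h := integral_kernel_le_of_lt_neg_one hθ0 hθ1 (w := -1 + -(1 + μ)) hμ (by linarith)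
      (by linarith)
    rw [show -1 + -(1 + μ) + 1 = -1 - μ by ring, mul_right_comm, ← rpow_add (by linarith),
      neg_add_cancel, rpow_zero, one_mul] at h
    have : (1 - (-1 + -(1 + μ))) ^ (θ - 1) / θ ≤ 1 / θ := by
      gcongr
      exact rpow_le_one_of_one_le_of_nonpos (by linarith) (by linarith)
    have : 0 ≤ 1 / (1 - θ) := by have := sub_pos.2 hθ1; positivity
    linarith
  · rw [max_eq_left hμ.le, abs_of_pos (by linarith)] at hm ⊢
    have h := integral_kernel_le_of_neg_one_lt hθ0 hθ1 (w := μ + (1 + μ)) hμ (by linarith)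
      (by linarith)
    rw [show μ + (1 + μ) - μ = 1 + μ by ring, mul_rpow (by linarith) (by linarith),
      mul_right_comm, ← rpow_add (by linarith), show θ - 1 + (1 - θ) = 0 by ring, rpow_zero,
      one_mul] at h
    have : (1 - (μ + (1 + μ))) ^ (θ - 1) / (1 - θ) ≤ 1 / (1 - θ) := by
      gcongr
      exact rpow_le_one_of_one_le_of_nonpos (by linarith) (by linarith)
    have : 0 ≤ 1 / θ := by positivity
    linarith

lemma abs_kernelIntegral_add_log_le_of_lt_neg_half (hθ0 : 0 < θ) (hθ1 : θ < 1) (hμ2 : -2 < μ)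
    (hμ : μ < -1 / 2) (hμ1 : μ ≠ -1) :
    |kernelIntegral θ μ + 2 ^ (θ - 1) * log (|1 + μ|)| ≤ 1 / (1 - θ) + 3 / θ + 4 := by
  set b := max μ (-1)
  set a := |1 + μ| with ha
  set e := max 1 (-μ)
  -- On `(m, 0)` the factors `1 + l` and `l - μ` are within a factor `2` of each other.
  set m := b + a with hm
  have ha0 : 0 < a := abs_pos.2 fun h => hμ1 (by linarith)
  have hside : (b = -1 ∧ a = -1 - μ ∧ e = -μ) ∨ (b = μ ∧ a = 1 + μ ∧ e = 1) := by
    rcases hμ1.lt_or_gt with h | h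
    · exact Or.inl ⟨max_eq_right h.le, by rw [ha, abs_of_neg (by linarith)]; ring,
        max_eq_right (by linarith)⟩
    · exact Or.inr ⟨max_eq_left h.le, abs_of_pos (by linarith), max_eq_left (by linarith)⟩
  obtain ⟨hm0, hm2, hma, hme⟩ : m ≤ 0 ∧ 1 + 2 * μ ≤ m ∧ a ≤ 1 + m ∧ m + e = 2 * a := by
    rcases hside with ⟨h1, h2, h3⟩ | ⟨h1, h2, h3⟩ <;> refine ⟨?_, ?_, ?_, ?_⟩ <;> linarith
  have he1 : 1 ≤ e := le_max_left _ _
  have he2 : e ≤ 2 := max_le one_le_two (by linarith)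
  have hbm : b ≤ m := by linarith
  have hint : ∀ s t, b ≤ s → s ≤ t → t ≤ 1 → IntervalIntegrable (kernel θ μ) volume s t :=
    fun s t hs hst ht => intervalIntegrable_kernel_of_le hθ0 hθ1 hμ1 (by linarith) hs hst ht
  have hcont : ContinuousOn (fun l => 2 ^ (θ - 1) / (l + e)) (uIcc m 0) :=
    continuousOn_const.div (by fun_prop) fun l hl => by
      rw [uIcc_of_le hm0] at hl
      linarith [hl.1]
  have hdecomp : kernelIntegral θ μ + 2 ^ (θ - 1) * log a =
      (∫ l in b..m, kernel θ μ l) + (∫ l in m..0, (kernel θ μ l - 2 ^ (θ - 1) / (l + e))) +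
        2 ^ (θ - 1) * log (e / 2) + ∫ l in (0 : ℝ)..1, kernel θ μ l := by
    rw [kernelIntegral, ← integral_add_adjacent_intervals (hint b m le_rfl hbm (by linarith))
        (hint m 1 hbm (by linarith) le_rfl),
      ← integral_add_adjacent_intervals (hint m 0 hbm hm0 zero_le_one)
        (hint 0 1 (by linarith) zero_le_one le_rfl),
      integral_sub (hint m 0 hbm hm0 zero_le_one) hcont.intervalIntegrable,
      integral_const_div_add (by linarith) (by linarith), hme, log_mul two_ne_zero ha0.ne',
      log_div (by linarith) two_ne_zero]
    ring
  have hnear : ∫ l in b..m, kernel θ μ l ≤ 1 / (1 - θ) + 1 / θ :=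
    integral_kernel_le_of_add_abs_le_zero hθ0 hθ1 hμ1 hm0
  have hnear0 : 0 ≤ ∫ l in b..m, kernel θ μ l := integral_kernel_nonneg hbm le_rfl (by linarith)
  have hmid : |∫ l in m..0, (kernel θ μ l - 2 ^ (θ - 1) / (l + e))| ≤ 3 :=
    abs_integral_kernel_sub_inv_le hθ0 hθ1 hμ1 hm2 hma hm0
  have hc : |2 ^ (θ - 1) * log (e / 2)| ≤ 1 :=
    abs_two_rpow_mul_log_le_one hθ1.le (by linarith) (by linarith)
  have hfar := integral_kernel_zero_one_le hθ0 hθ1 hμ.le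
  have hfar0 : 0 ≤ ∫ l in (0 : ℝ)..1, kernel θ μ l :=
    integral_kernel_nonneg zero_le_one (by linarith) le_rfl
  rw [abs_le] at hmid hc
  rw [hdecomp, abs_le]
  have h3 : 3 / θ = 1 / θ + 2 / θ := by ring
  have hpos : 0 < 1 / θ + 1 / (1 - θ) := by have := sub_pos.2 hθ1; positivity
  constructor <;> linarith

end Kernel

lemma abs_kernelIntegral_add_log_le {θ μ : ℝ} (hθ0 : 0 < θ) (hθ1 : θ < 1)
    (hμ : μ ∈ Ioo (-2 : ℝ) 1) :
    |kernelIntegral θ μ + 2 ^ (θ - 1) * log (|1 + μ|)| ≤ 2 / (1 - θ) + 3 / θ + 4 := by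
  obtain ⟨hμ2, hμ1⟩ := hμ
  have hθ' : 0 < 1 - θ := sub_pos.2 hθ1
  rcases eq_or_ne μ (-1) with rfl | hμ'
  · rw [kernelIntegral_neg_one hθ1.le]
    norm_num
    positivity
  rcases lt_or_ge μ (-1 / 2) with h | h
  · have : 1 / (1 - θ) ≤ 2 / (1 - θ) := by gcongr; norm_num
    linarith [abs_kernelIntegral_add_log_le_of_lt_neg_half hθ0 hθ1 hμ2 h hμ']
  · have hI := kernelIntegral_le_of_neg_half_le hθ0 hθ1 h hμ1
    have hI0 : 0 ≤ kernelIntegral θ μ :=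
      integral_kernel_nonneg (max_le hμ1.le (by norm_num)) le_rfl le_rfl
    have hc := abs_two_rpow_mul_log_le_one hθ1.le (x := |1 + μ|)
      (by rw [abs_of_pos (by linarith)]; linarith) (by rw [abs_of_pos (by linarith)]; linarith)
    have : 1 / θ ≤ 3 / θ := by gcongr; norm_num
    have : 0 < 2 / (1 - θ) := by positivity
    rw [abs_le] at hc ⊢
    constructor <;> linarith

/-- Logarithmic behaviour of `I_A` near `μ = -1` for `A ∈ [2,3)`, `θ = (A-1)/2`:
there is a constant `C₀` with `I_A(μ) - C₀ ln|1+μ|` uniformly bounded on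
`(-2, 1)`. -/
theorem stmt11 (A θ : ℝ) (hA1 : 2 ≤ A) (hA2 : A < 3) (hθ : θ = (A - 1) / 2)
    (IA : ℝ → ℝ)
    (hIA : ∀ μ : ℝ, IA μ =
      if -1 < μ then
        (2 : ℝ) ^ (-θ) / (Real.Gamma θ * Real.Gamma (1 - θ)) *
          ∫ l in Set.Ioo μ 1, (l - μ) ^ (-θ) * (1 - l ^ 2) ^ (θ - 1)
      else
        (2 : ℝ) ^ (-θ) / (Real.Gamma θ * Real.Gamma (1 - θ)) *
          ∫ l in Set.Ioo (-1 : ℝ) 1, (l - μ) ^ (-θ) * (1 - l ^ 2) ^ (θ - 1)) :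
    ∃ C₀ C : ℝ, 0 ≤ C ∧
      ∀ μ ∈ Set.Ioo (-2 : ℝ) 1, |IA μ - C₀ * Real.log (|1 + μ|)| ≤ C := by
  have hθ0 : 0 < θ := by linarith
  have hθ1 : θ < 1 := by linarith
  set K := (2 : ℝ) ^ (-θ) / (Gamma θ * Gamma (1 - θ))
  have hK : 0 < K := div_pos (rpow_pos_of_pos two_pos _)
    (mul_pos (Gamma_pos_of_pos hθ0) (Gamma_pos_of_pos (by linarith)))
  refine ⟨-(K * 2 ^ (θ - 1)), K * (2 / (1 - θ) + 3 / θ + 4),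
    mul_nonneg hK.le (by have := sub_pos.2 hθ1; positivity), fun μ hμ => ?_⟩
  have hIAμ : IA μ = K * kernelIntegral θ μ := by
    rw [hIA, kernelIntegral, integral_of_le (max_le hμ.2.le (by norm_num)),
      integral_Ioc_eq_integral_Ioo]
    split_ifs with h
    · rw [max_eq_left h.le]; rfl
    · rw [max_eq_right (not_lt.1 h)]; rfl
  calc |IA μ - -(K * 2 ^ (θ - 1)) * log (|1 + μ|)|
      = K * |kernelIntegral θ μ + 2 ^ (θ - 1) * log (|1 + μ|)| := by
        rw [hIAμ, ← abs_of_pos hK, ← abs_mul, abs_of_pos hK]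
        ring_nf
    _ ≤ K * (2 / (1 - θ) + 3 / θ + 4) := by
        gcongr
        exact abs_kernelIntegral_add_log_le hθ0 hθ1 hμ
end
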